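/- arXiv:2603.15099 — 6 statements merged into one kernel-verified Lean document; each statement's English description precedes it below -/
import Mathlib

section
/- For every relational expression E over a database scheme there exists a formula φ such that E is semantically equivalent to φ, i.e., ε(‖E‖_M) = ‖φ‖_M for every database M (every choice of nonempty finite domain M and interpretations r^M ⊆ M^{δ(r)}). -/
/-- First-order formulas over relation symbols `R` with arities `δ` and variables `𝒳`. -/
inductive Fml (R : Type) (δ : R → ℕ) (𝒳 : Type) : Type
  | one : Fml R δ 𝒳
  | rel (r : R) (x : Fin (δ r) → 𝒳) : Fml R δ 𝒳
  | eql (x y : 𝒳) : Fml R δ 𝒳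
  | not (φ : Fml R δ 𝒳) : Fml R δ 𝒳
  | and (φ ψ : Fml R δ 𝒳) : Fml R δ 𝒳
  | or (φ ψ : Fml R δ 𝒳) : Fml R δ 𝒳
  | ex (x : 𝒳) (φ : Fml R δ 𝒳) : Fml R δ 𝒳

variable {R : Type} {δ : R → ℕ} {𝒳 : Type}

/-- The value `‖φ‖` of a formula in the structure with domain `M` and interpretation `I`. -/
def val {M : Type} (I : ∀ r : R, Set (Fin (δ r) → M)) : Fml R δ 𝒳 → Set (𝒳 → M)
  | .one => Set.univ
  | .rel r x => {v | (fun i => v (x i)) ∈ I r}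
  | .eql x y => {v | v x = v y}
  | .not φ => (val I φ)ᶜ
  | .and φ ψ => val I φ ∩ val I ψ
  | .or φ ψ => val I φ ∪ val I ψ
  | .ex x φ => {v | ∃ u ∈ val I φ, ∀ y ≠ x, u y = v y}

/-- Relational expressions over the database scheme assigning to each relation
symbol `r` the canonical pairwise-distinct variables `Y r`. Each expression is
indexed by its relation scheme. -/
inductive RExpr (R : Type) (δ : R → ℕ) (𝒳 : Type) (Y : ∀ r : R, Fin (δ r) → 𝒳) :
    Set 𝒳 → Type
  | dee : RExpr R δ 𝒳 Y ∅
  | rel (r : R) : RExpr R δ 𝒳 Y (Set.range (Y r))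
  | union {S : Set 𝒳} : RExpr R δ 𝒳 Y S → RExpr R δ 𝒳 Y S → RExpr R δ 𝒳 Y S
  | diff {S : Set 𝒳} : RExpr R δ 𝒳 Y S → RExpr R δ 𝒳 Y S → RExpr R δ 𝒳 Y S
  | join {S₁ S₂ : Set 𝒳} : RExpr R δ 𝒳 Y S₁ → RExpr R δ 𝒳 Y S₂ →
      RExpr R δ 𝒳 Y (S₁ ∪ S₂)
  | proj {S : Set 𝒳} (S' : Set 𝒳) (h : S' ⊆ S) : RExpr R δ 𝒳 Y S → RExpr R δ 𝒳 Y S'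
  | sel {S : Set 𝒳} (x y : 𝒳) (hx : x ∈ S) (hy : y ∈ S) :
      RExpr R δ 𝒳 Y S → RExpr R δ 𝒳 Y S
  | ren {S : Set 𝒳} (x y : 𝒳) (hx : x ∈ S) (hy : y ∉ S) :
      RExpr R δ 𝒳 Y S → RExpr R δ 𝒳 Y ((S \ {x}) ∪ {y})

/-- Restriction of a tuple over `S` to a subscheme `S'`. -/
def restr {M : Type} {S' S : Set 𝒳} (h : S' ⊆ S) (t : S → M) : S' → M :=
  fun a => t ⟨a.1, h a.2⟩

/-- Renaming of the tuple `t` over `S`: variable `x` is renamed to `y`. -/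
def renTup {M : Type} [DecidableEq 𝒳] {S : Set 𝒳} (x y : 𝒳) (hx : x ∈ S)
    (t : S → M) : (↥((S \ {x}) ∪ {y})) → M :=
  fun z =>
    if h : z.1 = y then t ⟨x, hx⟩
    else t ⟨z.1, by
      rcases z.2 with h' | h'
      · exact h'.1
      · exact absurd h' h⟩

/-- The value `‖E‖` of a relational expression in the database with domain `M`
and interpretation `I`: a relation over the scheme of `E`. -/
def valE {M : Type} [DecidableEq 𝒳] {Y : ∀ r : R, Fin (δ r) → 𝒳}
    (I : ∀ r : R, Set (Fin (δ r) → M)) :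
    {S : Set 𝒳} → RExpr R δ 𝒳 Y S → Set (S → M)
  | _, .dee => Set.univ
  | _, .rel r => {t | (fun i => t ⟨Y r i, Set.mem_range_self i⟩) ∈ I r}
  | _, .union E₁ E₂ => valE I E₁ ∪ valE I E₂
  | _, .diff E₁ E₂ => valE I E₁ \ valE I E₂
  | _, .join E₁ E₂ =>
      {t | restr Set.subset_union_left t ∈ valE I E₁ ∧
           restr Set.subset_union_right t ∈ valE I E₂}
  | _, .proj _ h E => restr h '' valE I E
  | _, .sel x y hx hy E => {t ∈ valE I E | t ⟨x, hx⟩ = t ⟨y, hy⟩}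
  | _, .ren x y hx _ E => renTup x y hx '' valE I E

/-- `eps T` is the set of all valuations whose restriction to `S` lies in `T`. -/
def eps {M : Type} {S : Set 𝒳} (T : Set (S → M)) : Set (𝒳 → M) :=
  {v | (fun a : S => v a.1) ∈ T}

/-- Iterated existential quantification over a list of variables. -/
def Exs {R : Type} {δ : R → ℕ} {𝒳 : Type} (L : List 𝒳) (φ : Fml R δ 𝒳) : Fml R δ 𝒳 :=
  L.foldr .ex φ

lemma val_Exs {R : Type} {δ : R → ℕ} {𝒳 : Type} [DecidableEq 𝒳] {M : Type}
    (I : ∀ r : R, Set (Fin (δ r) → M)) (L : List 𝒳) (φ : Fml R δ 𝒳) :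
    val I (Exs L φ) = {v | ∃ u ∈ val I φ, ∀ y, y ∉ L → u y = v y} := by
  induction L with
  | nil =>
    ext v
    simp only [Exs, List.foldr_nil, Set.mem_setOf_eq]
    constructor
    · intro h; exact ⟨v, h, fun _ _ => rfl⟩
    · rintro ⟨u, hu, h⟩
      have : u = v := funext fun z => h z List.not_mem_nil
      exact this ▸ hu
  | cons x L ih =>
    ext v
    show v ∈ val I (.ex x (Exs L φ)) ↔ _
    simp only [val, ih, Set.mem_setOf_eq]
    constructor
    · rintro ⟨u, ⟨w, hw, hwu⟩, huv⟩
      refine ⟨w, hw, fun z hz => ?_⟩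
      simp only [List.mem_cons, not_or] at hz
      rw [hwu z hz.2, huv z hz.1]
    · rintro ⟨w, hw, h⟩
      refine ⟨fun z => if z = x then w x else v z, ⟨w, hw, fun z hz => ?_⟩, fun z hz => ?_⟩
      · by_cases hzx : z = x
        · subst hzx; simp
        · simp only [if_neg hzx]
          exact h z (by simp [List.mem_cons, hzx, hz])
      · simp [hz]

theorem stmt3 {R : Type} [Fintype R] {δ : R → ℕ} {𝒳 : Type} [Fintype 𝒳]
    [DecidableEq 𝒳] (Y : ∀ r : R, Fin (δ r) → 𝒳)
    (hY : ∀ r, Function.Injective (Y r))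
    {S : Set 𝒳} (E : RExpr R δ 𝒳 Y S) :
    ∃ φ : Fml R δ 𝒳, ∀ (M : Type) [Fintype M] [Nonempty M]
      (I : ∀ r : R, Set (Fin (δ r) → M)),
      eps (valE I E) = val I φ := by
  classical
  induction E with
  | dee =>
    exact ⟨.one, fun M _ _ I => rfl⟩
  | rel r =>
    exact ⟨.rel r (Y r), fun M _ _ I => rfl⟩
  | union E₁ E₂ ih₁ ih₂ =>
    obtain ⟨φ₁, h₁⟩ := ih₁
    obtain ⟨φ₂, h₂⟩ := ih₂
    refine ⟨.or φ₁ φ₂, ?_⟩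
    intro M MF MN I
    ext v
    have e₁ := Set.ext_iff.mp (h₁ M I) v
    have e₂ := Set.ext_iff.mp (h₂ M I) v
    show _ ∈ valE I E₁ ∪ valE I E₂ ↔ _
    simp only [Set.mem_union]
    exact or_congr e₁ e₂
  | diff E₁ E₂ ih₁ ih₂ =>
    obtain ⟨φ₁, h₁⟩ := ih₁
    obtain ⟨φ₂, h₂⟩ := ih₂
    refine ⟨.and φ₁ (.not φ₂), ?_⟩
    intro M MF MN I
    ext v
    have e₁ := Set.ext_iff.mp (h₁ M I) v
    have e₂ := Set.ext_iff.mp (h₂ M I) v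
    show _ ∈ valE I E₁ \ valE I E₂ ↔ _
    simp only [Set.mem_diff]
    exact and_congr e₁ (not_congr e₂)
  | join E₁ E₂ ih₁ ih₂ =>
    obtain ⟨φ₁, h₁⟩ := ih₁
    obtain ⟨φ₂, h₂⟩ := ih₂
    refine ⟨.and φ₁ φ₂, ?_⟩
    intro M MF MN I
    ext v
    have e₁ := Set.ext_iff.mp (h₁ M I) v
    have e₂ := Set.ext_iff.mp (h₂ M I) v
    show (restr _ _ ∈ valE I E₁ ∧ restr _ _ ∈ valE I E₂) ↔ _
    exact and_congr e₁ e₂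
  | sel x y hx hy E ih =>
    obtain ⟨φ, hφ⟩ := ih
    refine ⟨.and φ (.eql x y), ?_⟩
    intro M MF MN I
    ext v
    have e := Set.ext_iff.mp (hφ M I) v
    show (_ ∈ valE I E ∧ v x = v y) ↔ (_ ∧ v x = v y)
    exact and_congr e Iff.rfl
  | @proj S S' hS' E ih =>
    obtain ⟨φ, hφ⟩ := ih
    refine ⟨Exs (Finset.univ.filter (fun z => z ∉ S')).toList φ, ?_⟩
    intro M MF MN I
    ext v
    rw [val_Exs]
    have hmem : ∀ z : 𝒳, z ∉ (Finset.univ.filter (fun z => z ∉ S')).toList ↔ z ∈ S' := by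
      intro z
      simp [Finset.mem_toList, Finset.mem_filter]
    constructor
    · rintro ⟨t, htT, hrestr⟩
      refine ⟨fun z => if hz : z ∈ S then t ⟨z, hz⟩ else v z, ?_, ?_⟩
      · rw [← hφ M I]
        show (fun a => _) ∈ valE I E
        convert htT using 1
        funext a
        simp only [dif_pos a.2]
      · intro z hz
        rw [hmem] at hz
        have hzS := hS' hz
        simp only [dif_pos hzS]
        have := congrFun hrestr ⟨z, hz⟩
        exact this
    · rintro ⟨u, hu, huv⟩
      rw [← hφ M I] at hu
      refine ⟨fun a => u a.1, hu, ?_⟩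
      funext a
      show u a.1 = v a.1
      exact huv a.1 ((hmem a.1).mpr a.2)
  | @ren S x y hx hy E ih =>
    obtain ⟨φ, hφ⟩ := ih
    refine ⟨.ex x (.and φ (.eql x y)), ?_⟩
    intro M MF MN I
    have hxy : x ≠ y := fun e => hy (e ▸ hx)
    ext v
    constructor
    · rintro ⟨t, htT, hret⟩
      refine ⟨fun z => if hz : z ∈ S then t ⟨z, hz⟩ else v z, ⟨?_, ?_⟩, ?_⟩
      · rw [← hφ M I]
        show (fun a => _) ∈ valE I E
        convert htT using 1
        funext a
        simp only [dif_pos a.2]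
      · show _ = _
        simp only [dif_pos hx, dif_neg hy]
        have := congrFun hret ⟨y, Or.inr rfl⟩
        simp only [renTup, dif_pos rfl] at this
        exact this
      · intro z hzx
        by_cases hz : z ∈ S
        · simp only [dif_pos hz]
          have := congrFun hret ⟨z, Or.inl ⟨hz, hzx⟩⟩
          have hzy : z ≠ y := fun e => hy (e ▸ hz)
          simpa only [renTup, dif_neg hzy] using this
        · simp only [dif_neg hz]
    · rintro ⟨u, ⟨huφ, hux⟩, huv⟩
      rw [← hφ M I] at huφ
      refine ⟨fun a => u a.1, huφ, ?_⟩
      funext z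
      show renTup x y hx _ z = v z.1
      by_cases hz : z.1 = y
      · simp only [renTup, dif_pos hz]
        have h1 : u x = u y := hux
        have h2 : u y = v y := huv y (Ne.symm hxy)
        rw [h1, h2, hz]
      · simp only [renTup, dif_neg hz]
        rcases z.2 with h' | h'
        · exact huv z.1 h'.2
        · exact absurd h' hz
end

section
/- Let r ∈ R have arity n, let x₁,…,xₙ be pairwise distinct variables, let y₁,…,yₙ be arbitrary variables, and let z₁,…,zₙ be pairwise distinct variables such that {z₁,…,zₙ} is disjoint from {x₁,…,xₙ, y₁,…,yₙ}. Then in every structure, the formula (r(x₁,…,xₙ))[x₁/z₁,…,xₙ/zₙ, z₁/y₁,…,zₙ/yₙ] has the same value as r(y₁,…,yₙ): ‖(r(x₁,…,xₙ))[x₁/z₁,…,xₙ/zₙ, z₁/y₁,…,zₙ/yₙ]‖ = ‖r(y₁,…,yₙ)‖. -/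
variable {R : Type} {δ : R → ℕ} {𝒳 : Type}

/-- Free variables of a formula. -/
def FV [DecidableEq 𝒳] [Fintype 𝒳] : Fml R δ 𝒳 → Finset 𝒳
  | .one => ∅
  | .rel _ x => Finset.univ.image x
  | .eql x y => {x, y}
  | .not φ => FV φ
  | .and φ ψ => FV φ ∪ FV ψ
  | .or φ ψ => FV φ ∪ FV ψ
  | .ex x φ => FV φ \ {x}

/-- The identity relation on `𝒳` (as a set of pairs). -/
def idRel' : Set (𝒳 × 𝒳) := {p | p.1 = p.2}

/-- `EqGen R₀`: the smallest equivalence relation on `𝒳` containing `R₀`. -/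
def EqGen (R₀ : Set (𝒳 × 𝒳)) : Set (𝒳 × 𝒳) :=
  {p | Relation.EqvGen (fun a b => (a, b) ∈ R₀) p.1 p.2}

/-- `(𝒳∖{x}) × (𝒳∖{x})` as a set of pairs. -/
def offDiag (x : 𝒳) : Set (𝒳 × 𝒳) := {p | p.1 ≠ x ∧ p.2 ≠ x}

/-- The pair `(eq(φ), coeq(φ))` of the equality and coequality equivalences of `φ`. -/
def eqco : Fml R δ 𝒳 → Set (𝒳 × 𝒳) × Set (𝒳 × 𝒳)
  | .one => (idRel', idRel')
  | .rel _ _ => (idRel', idRel')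
  | .eql x y => (EqGen {(x, y)}, idRel')
  | .not φ => ((eqco φ).2, (eqco φ).1)
  | .and φ ψ => (EqGen ((eqco φ).1 ∪ (eqco ψ).1), (eqco φ).2 ∩ (eqco ψ).2)
  | .or φ ψ => ((eqco φ).1 ∩ (eqco ψ).1, EqGen ((eqco φ).2 ∪ (eqco ψ).2))
  | .ex x φ => (EqGen ((eqco φ).1 ∩ offDiag x), EqGen ((eqco φ).2 ∩ offDiag x))

/-- `eq(φ)`. -/
def eqR (φ : Fml R δ 𝒳) : Set (𝒳 × 𝒳) := (eqco φ).1

/-- `coeq(φ)`. -/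
def coeqR (φ : Fml R δ 𝒳) : Set (𝒳 × 𝒳) := (eqco φ).2

/-- `cl_E(X)`. -/
def clE (E : Set (𝒳 × 𝒳)) (X : Set 𝒳) : Set 𝒳 := {y | ∃ x ∈ X, (x, y) ∈ E}

/-- The pair `(gen₀(φ), cogen₀(φ))`. -/
def genco0 : Fml R δ 𝒳 → Set 𝒳 × Set 𝒳
  | .one => (∅, ∅)
  | .rel _ x => (Set.range x, ∅)
  | .eql _ _ => (∅, ∅)
  | .not φ => ((genco0 φ).2, (genco0 φ).1)
  | .and φ ψ =>
      (clE (eqR (φ.and ψ)) ((genco0 φ).1 ∪ (genco0 ψ).1),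
       (genco0 φ).2 ∩ (genco0 ψ).2)
  | .or φ ψ =>
      ((genco0 φ).1 ∩ (genco0 ψ).1,
       clE (EqGen (coeqR φ ∪ coeqR ψ)) ((genco0 φ).2 ∪ (genco0 ψ).2))
  | .ex x φ => ((genco0 φ).1 \ {x}, (genco0 φ).2 \ {x})

/-- `gen₀(φ)`. -/
def gen0 (φ : Fml R δ 𝒳) : Set 𝒳 := (genco0 φ).1

/-- `cogen₀(φ)`. -/
def cogen0 (φ : Fml R δ 𝒳) : Set 𝒳 := (genco0 φ).2

/-- Every subformula of the form `(∃x)ψ` satisfies `x ∈ gen₀(ψ)`. -/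
def ExOK : Fml R δ 𝒳 → Prop
  | .one => True
  | .rel _ _ => True
  | .eql _ _ => True
  | .not φ => ExOK φ
  | .and φ ψ => ExOK φ ∧ ExOK ψ
  | .or φ ψ => ExOK φ ∧ ExOK ψ
  | .ex x φ => x ∈ gen0 φ ∧ ExOK φ

/-- A formula is allowed if `FV(φ) = gen₀(φ)` and every existential subformula
`(∃x)ψ` satisfies `x ∈ gen₀(ψ)`. -/
def Allowed [DecidableEq 𝒳] [Fintype 𝒳] (φ : Fml R δ 𝒳) : Prop :=
  (↑(FV φ) : Set 𝒳) = gen0 φ ∧ ExOK φ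

/-- Positive formulas (`φ∨ψ` read as `¬(¬φ∧¬ψ)`). -/
def Positive : Fml R δ 𝒳 → Prop
  | .one => True
  | .rel _ _ => True
  | .eql _ _ => True
  | .not φ => ¬ Positive φ
  | .and φ ψ => Positive φ ∨ Positive ψ
  | .or φ ψ => Positive φ ∧ Positive ψ
  | .ex _ φ => Positive φ

/-- The diagonal `D_{x,y}`. -/
def diag {M : Type} (x y : 𝒳) : Set (𝒳 → M) := {v | v x = v y}

/-- The substitution `(χ)[u/w] = (∃u)(χ ∧ (u ≈ w))`. -/
def subst (χ : Fml R δ 𝒳) (u w : 𝒳) : Fml R δ 𝒳 := .ex u (.and χ (.eql u w))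

/-- Iterated substitution `(χ)[u₁/w₁,…,u_k/w_k]`, applied left to right. -/
def substFold (χ : Fml R δ 𝒳) (l : List (𝒳 × 𝒳)) : Fml R δ 𝒳 :=
  l.foldl (fun acc p => subst acc p.1 p.2) χ


section AuxStmt4
variable {R : Type} {δ : R → ℕ} {𝒳 : Type} [DecidableEq 𝒳] {M : Type}

/-- Fold of updates corresponding to iterated substitution. -/
def Gupd : List (𝒳 × 𝒳) → (𝒳 → M) → (𝒳 → M)
  | [], v => v
  | p :: l, v => Function.update (Gupd l v) p.1 (Gupd l v p.2)

lemma val_subst (I : ∀ r : R, Set (Fin (δ r) → M)) (χ : Fml R δ 𝒳) {u w : 𝒳}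
    (huw : u ≠ w) (v : 𝒳 → M) :
    v ∈ val I (subst χ u w) ↔ Function.update v u (v w) ∈ val I χ := by
  constructor
  · rintro ⟨u', ⟨h1, h2⟩, h3⟩
    have he : u' = Function.update v u (v w) := by
      funext a
      by_cases ha : a = u
      · subst ha
        rw [Function.update_self, h2]
        exact h3 w (Ne.symm huw)
      · rw [Function.update_of_ne ha]
        exact h3 a ha
    rwa [← he]
  · intro h
    refine ⟨Function.update v u (v w), ⟨h, ?_⟩, ?_⟩
    · show Function.update v u (v w) u = Function.update v u (v w) w
      rw [Function.update_self, Function.update_of_ne (Ne.symm huw)]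
    · intro a ha
      exact Function.update_of_ne ha _ _

lemma val_substFold (I : ∀ r : R, Set (Fin (δ r) → M)) (χ : Fml R δ 𝒳)
    (l : List (𝒳 × 𝒳)) (hl : ∀ p ∈ l, p.1 ≠ p.2) (v : 𝒳 → M) :
    v ∈ val I (substFold χ l) ↔ Gupd l v ∈ val I χ := by
  induction l generalizing χ with
  | nil => exact Iff.rfl
  | cons p l ih =>
    have : substFold χ (p :: l) = substFold (subst χ p.1 p.2) l := rfl
    rw [this, ih _ (fun q hq => hl q (List.mem_cons_of_mem _ hq)),
      val_subst I χ (hl p (List.mem_cons_self))]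
    exact Iff.rfl

lemma Gupd_not_mem (l : List (𝒳 × 𝒳)) (v : 𝒳 → M) (a : 𝒳)
    (ha : ∀ p ∈ l, p.1 ≠ a) : Gupd l v a = v a := by
  induction l with
  | nil => rfl
  | cons p l ih =>
    show Function.update (Gupd l v) p.1 (Gupd l v p.2) a = v a
    rw [Function.update_of_ne (Ne.symm (ha p (List.mem_cons_self)))]
    exact ih fun q hq => ha q (List.mem_cons_of_mem _ hq)

lemma Gupd_mem (l : List (𝒳 × 𝒳)) (hnd : (l.map Prod.fst).Nodup)
    (hsnd : ∀ p ∈ l, ∀ q ∈ l, p.1 ≠ q.2) (v : 𝒳 → M) {a b : 𝒳}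
    (hab : (a, b) ∈ l) : Gupd l v a = v b := by
  induction l with
  | nil => exact absurd hab List.not_mem_nil
  | cons p l ih =>
    rcases List.mem_cons.mp hab with h | h
    · show Function.update (Gupd l v) p.1 (Gupd l v p.2) a = v b
      have ha : a = p.1 := by rw [← h]
      have hb : b = p.2 := by rw [← h]
      subst ha; subst hb
      rw [Function.update_self]
      exact Gupd_not_mem l v p.2 fun q hq =>
        hsnd q (List.mem_cons_of_mem _ hq) p (List.mem_cons_self)
    · have hane : a ≠ p.1 := by
        intro he
        have : a ∈ l.map Prod.fst := List.mem_map.mpr ⟨(a, b), h, rfl⟩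
        rw [he] at this
        exact (List.nodup_cons.mp hnd).1 this
      show Function.update (Gupd l v) p.1 (Gupd l v p.2) a = v b
      rw [Function.update_of_ne hane]
      exact ih (List.nodup_cons.mp hnd).2
        (fun q hq q' hq' => hsnd q (List.mem_cons_of_mem _ hq) q'
          (List.mem_cons_of_mem _ hq')) h

lemma Gupd_append (l₁ l₂ : List (𝒳 × 𝒳)) (v : 𝒳 → M) :
    Gupd (l₁ ++ l₂) v = Gupd l₁ (Gupd l₂ v) := by
  induction l₁ with
  | nil => rfl
  | cons p l ih =>
    show Function.update (Gupd (l ++ l₂) v) p.1 (Gupd (l ++ l₂) v p.2) = _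
    rw [ih]; rfl

end AuxStmt4

theorem stmt4 {R : Type} [Fintype R] {δ : R → ℕ} {𝒳 : Type} [Fintype 𝒳]
    (r : R) (x y z : Fin (δ r) → 𝒳)
    (hx : Function.Injective x) (hz : Function.Injective z)
    (hzx : ∀ i j, z i ≠ x j) (hzy : ∀ i j, z i ≠ y j)
    (M : Type) [Fintype M] [Nonempty M] (I : ∀ r : R, Set (Fin (δ r) → M)) :
    val I (substFold (.rel r x)
        ((List.ofFn fun i => (x i, z i)) ++ (List.ofFn fun i => (z i, y i)))) =
      val I (.rel r y) := by
  classical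
  set l1 : List (𝒳 × 𝒳) := List.ofFn fun i => (x i, z i) with hl1
  set l2 : List (𝒳 × 𝒳) := List.ofFn fun i => (z i, y i) with hl2
  have hmem1 : ∀ p ∈ l1, ∃ i, p = (x i, z i) := by
    intro p hp
    obtain ⟨i, hi⟩ := List.mem_ofFn.mp hp
    exact ⟨i, hi.symm⟩
  have hmem2 : ∀ p ∈ l2, ∃ i, p = (z i, y i) := by
    intro p hp
    obtain ⟨i, hi⟩ := List.mem_ofFn.mp hp
    exact ⟨i, hi.symm⟩
  have hnd1 : (l1.map Prod.fst).Nodup := by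
    rw [hl1, List.map_ofFn]
    exact List.nodup_ofFn.mpr hx
  have hnd2 : (l2.map Prod.fst).Nodup := by
    rw [hl2, List.map_ofFn]
    exact List.nodup_ofFn.mpr hz
  have hsnd1 : ∀ p ∈ l1, ∀ q ∈ l1, p.1 ≠ q.2 := by
    intro p hp q hq
    obtain ⟨i, rfl⟩ := hmem1 p hp
    obtain ⟨j, rfl⟩ := hmem1 q hq
    exact Ne.symm (hzx j i)
  have hsnd2 : ∀ p ∈ l2, ∀ q ∈ l2, p.1 ≠ q.2 := by
    intro p hp q hq
    obtain ⟨i, rfl⟩ := hmem2 p hp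
    obtain ⟨j, rfl⟩ := hmem2 q hq
    exact hzy i j
  have hne : ∀ p ∈ l1 ++ l2, p.1 ≠ p.2 := by
    intro p hp
    rcases List.mem_append.mp hp with h | h
    · obtain ⟨i, rfl⟩ := hmem1 p h
      exact Ne.symm (hzx i i)
    · obtain ⟨i, rfl⟩ := hmem2 p h
      exact hzy i i
  ext v
  rw [val_substFold I _ _ hne v]
  have hkey : ∀ i, Gupd (l1 ++ l2) v (x i) = v (y i) := by
    intro i
    rw [Gupd_append]
    have h1 : Gupd l1 (Gupd l2 v) (x i) = Gupd l2 v (z i) :=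
      Gupd_mem l1 hnd1 hsnd1 _ (List.mem_ofFn.mpr ⟨i, rfl⟩)
    have h2 : Gupd l2 v (z i) = v (y i) :=
      Gupd_mem l2 hnd2 hsnd2 _ (List.mem_ofFn.mpr ⟨i, rfl⟩)
    rw [h1, h2]
  show ((fun i => Gupd (l1 ++ l2) v (x i)) ∈ I r) ↔ ((fun i => v (y i)) ∈ I r)
  rw [show (fun i => Gupd (l1 ++ l2) v (x i)) = (fun i => v (y i)) from
    funext hkey]
end

section
/- For every structure, every formula φ, and all variables x, y: if (x,y) ∈ eq(φ) then ‖φ‖ ⊆ D_{x,y}; and if (x,y) ∈ coeq(φ) then the complement of ‖φ‖ is contained in D_{x,y}. -/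
variable {R : Type} {δ : R → ℕ} {𝒳 : Type}

lemma eqGen_diag {𝒳 M : Type} {V : Set (𝒳 → M)} {R₀ : Set (𝒳 × 𝒳)}
    (h : ∀ p ∈ R₀, V ⊆ diag p.1 p.2) {a b : 𝒳} (hab : (a, b) ∈ EqGen R₀) :
    V ⊆ diag a b := by
  have hab' : Relation.EqvGen (fun a b => (a, b) ∈ R₀) a b := hab
  clear hab
  induction hab' with
  | rel a b hr => exact h (a, b) hr
  | refl a => intro v _; rfl
  | symm a b _ ih => intro v hv; exact (ih hv).symm
  | trans a b c _ _ ih1 ih2 => intro v hv; exact (ih1 hv).trans (ih2 hv)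

lemma stmt8_aux {R : Type} {δ : R → ℕ} {𝒳 M : Type}
    (I : ∀ r : R, Set (Fin (δ r) → M)) (φ : Fml R δ 𝒳) :
    ∀ x y : 𝒳, ((x, y) ∈ eqR φ → val I φ ⊆ diag x y) ∧
    ((x, y) ∈ coeqR φ → (val I φ)ᶜ ⊆ diag x y) := by
  induction φ with
  | one =>
    intro x y
    constructor <;> (intro h v _; exact congrArg v h)
  | rel r xs =>
    intro x y
    constructor <;> (intro h v _; exact congrArg v h)
  | eql a b =>
    intro x y
    constructor
    · intro h
      refine eqGen_diag ?_ h
      rintro p hp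
      have : p = (a, b) := hp
      subst this
      intro v hv; exact hv
    · intro h v _; exact congrArg v h
  | not φ ih =>
    intro x y
    constructor
    · intro h
      exact (ih x y).2 h
    · intro h
      have := (ih x y).1 h
      simpa [val] using this
  | and φ ψ ihφ ihψ =>
    intro x y
    constructor
    · intro h
      refine eqGen_diag ?_ h
      rintro p (hp | hp)
      · exact fun v hv => (ihφ p.1 p.2).1 hp hv.1
      · exact fun v hv => (ihψ p.1 p.2).1 hp hv.2
    · intro h v hv
      by_cases hφ : v ∈ val I φ
      · exact (ihψ x y).2 h.2 (fun h1 => hv ⟨hφ, h1⟩)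
      · exact (ihφ x y).2 h.1 hφ
  | or φ ψ ihφ ihψ =>
    intro x y
    constructor
    · intro h v hv
      rcases hv with hv | hv
      · exact (ihφ x y).1 h.1 hv
      · exact (ihψ x y).1 h.2 hv
    · intro h
      refine eqGen_diag ?_ h
      rintro p (hp | hp)
      · exact fun v hv => (ihφ p.1 p.2).2 hp (fun h1 => hv (Or.inl h1))
      · exact fun v hv => (ihψ p.1 p.2).2 hp (fun h1 => hv (Or.inr h1))
  | ex x₀ φ ih =>
    intro x y
    constructor
    · intro h
      refine eqGen_diag ?_ h
      rintro p ⟨hp, hp1, hp2⟩ v ⟨u, hu, heq⟩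
      calc v p.1 = u p.1 := (heq _ hp1).symm
        _ = u p.2 := (ih p.1 p.2).1 hp hu
        _ = v p.2 := heq _ hp2
    · intro h
      refine eqGen_diag ?_ h
      rintro p ⟨hp, hp1, hp2⟩ v hv
      have hv' : v ∉ val I φ := fun h1 => hv ⟨v, h1, fun _ _ => rfl⟩
      exact (ih p.1 p.2).2 hp hv'

theorem stmt8 {R : Type} [Fintype R] {δ : R → ℕ} {𝒳 : Type} [Fintype 𝒳]
    (M : Type) [Fintype M] [Nonempty M] (I : ∀ r : R, Set (Fin (δ r) → M))
    (φ : Fml R δ 𝒳) (x y : 𝒳) :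
    ((x, y) ∈ eqR φ → val I φ ⊆ diag x y) ∧
    ((x, y) ∈ coeqR φ → (val I φ)ᶜ ⊆ diag x y) := by
  exact stmt8_aux I φ x y
end

section
/- Let N ⊆ M, X ⊆ 𝒳, and let φ be a formula such that π_X(‖φ‖) ⊆ N^X. Then π_{cl_{eq(φ)}(X)}(‖φ‖) ⊆ N^{cl_{eq(φ)}(X)}. -/
variable {R : Type} {δ : R → ℕ} {𝒳 : Type}

/-- Projection of a set of valuations onto a set `X` of variables. -/
def proj {M : Type} {𝒳 : Type} (X : Set 𝒳) (V : Set (𝒳 → M)) : Set (X → M) :=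
  (fun (v : 𝒳 → M) (a : X) => v a.1) '' V

/-- `funPow N X`: all functions `X → M` with range contained in `N`. -/
def funPow {M : Type} {𝒳 : Type} (N : Set M) (X : Set 𝒳) : Set (X → M) :=
  {f | ∀ a, f a ∈ N}

lemma eqvgen_eq {M : Type} {f : 𝒳 → M} {S : Set (𝒳 × 𝒳)}
    (h : ∀ a b, (a, b) ∈ S → f a = f b) :
    ∀ a b, Relation.EqvGen (fun a b => (a, b) ∈ S) a b → f a = f b := by
  intro a b hab
  induction hab with
  | rel a b hr => exact h a b hr
  | refl a => rfl
  | symm a b _ ih => exact ih.symm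
  | trans a b c _ _ ih1 ih2 => exact ih1.trans ih2

lemma eq_of_eqR {M : Type} (I : ∀ r : R, Set (Fin (δ r) → M)) (φ : Fml R δ 𝒳) :
    (∀ v ∈ val I φ, ∀ p ∈ eqR φ, v p.1 = v p.2) ∧
    (∀ v ∉ val I φ, ∀ p ∈ coeqR φ, v p.1 = v p.2) := by
  induction φ with
  | one => exact ⟨fun v _ p hp => congrArg v hp, fun v _ p hp => congrArg v hp⟩
  | rel r x => exact ⟨fun v _ p hp => congrArg v hp, fun v _ p hp => congrArg v hp⟩
  | eql x y =>
    refine ⟨fun v hv p hp => ?_, fun v _ p hp => congrArg v hp⟩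
    exact eqvgen_eq (fun a b hab => by
      simp only [Set.mem_singleton_iff, Prod.mk.injEq] at hab
      obtain ⟨rfl, rfl⟩ := hab; exact hv) p.1 p.2 hp
  | not φ ih =>
    exact ⟨fun v hv p hp => ih.2 v hv p hp,
      fun v hv p hp => ih.1 v (by simpa [val] using hv) p hp⟩
  | and φ ψ ihφ ihψ =>
    constructor
    · intro v hv p hp
      exact eqvgen_eq (fun a b hab => hab.elim
        (fun h' => ihφ.1 v hv.1 (a, b) h') (fun h' => ihψ.1 v hv.2 (a, b) h')) p.1 p.2 hp
    · intro v hv p hp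
      have hv' : ¬(v ∈ val I φ ∧ v ∈ val I ψ) := hv
      rcases not_and_or.mp hv' with h' | h'
      · exact ihφ.2 v h' p hp.1
      · exact ihψ.2 v h' p hp.2
  | or φ ψ ihφ ihψ =>
    constructor
    · intro v hv p hp
      rcases hv with h' | h'
      · exact ihφ.1 v h' p hp.1
      · exact ihψ.1 v h' p hp.2
    · intro v hv p hp
      have hv' : v ∉ val I φ ∧ v ∉ val I ψ := by
        simpa [val, not_or] using hv
      exact eqvgen_eq (fun a b hab => hab.elim
        (fun h' => ihφ.2 v hv'.1 (a, b) h') (fun h' => ihψ.2 v hv'.2 (a, b) h')) p.1 p.2 hp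
  | ex x φ ih =>
    constructor
    · intro v hv p hp
      obtain ⟨u, hu, hagree⟩ := hv
      refine eqvgen_eq (fun a b hab => ?_) p.1 p.2 hp
      obtain ⟨hab, ha, hb⟩ := hab
      rw [← hagree a ha, ← hagree b hb]
      exact ih.1 u hu (a, b) hab
    · intro v hv p hp
      have hvφ : v ∉ val I φ := fun hc => hv ⟨v, hc, fun _ _ => rfl⟩
      refine eqvgen_eq (fun a b hab => ?_) p.1 p.2 hp
      exact ih.2 v hvφ (a, b) hab.1

theorem stmt12 {R : Type} [Fintype R] {δ : R → ℕ} {𝒳 : Type} [Fintype 𝒳]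
    (M : Type) [Fintype M] [Nonempty M] (I : ∀ r : R, Set (Fin (δ r) → M))
    (N : Set M) (X : Set 𝒳) (φ : Fml R δ 𝒳)
    (h : proj X (val I φ) ⊆ funPow N X) :
    proj (clE (eqR φ) X) (val I φ) ⊆ funPow N (clE (eqR φ) X) := by
  rintro g ⟨v, hv, rfl⟩ ⟨a, ha⟩
  obtain ⟨x, hx, hxe⟩ := ha
  have : v a = v x := ((eq_of_eqR I φ).1 v hv (x, a) hxe).symm
  show v a ∈ N
  rw [this]
  exact h ⟨v, hv, rfl⟩ ⟨x, hx⟩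
end

section
/- For every structure M and every formula φ: π_{gen₀(φ)}(‖φ‖) ⊆ A(M)^{gen₀(φ)} and π_{cogen₀(φ)}(complement of ‖φ‖) ⊆ A(M)^{cogen₀(φ)}. -/
variable {R : Type} {δ : R → ℕ} {𝒳 : Type}

/-- The active domain of a structure: all components of tuples occurring in the
interpretations of the relation symbols. -/
def adom {R : Type} {δ : R → ℕ} {M : Type} (I : ∀ r : R, Set (Fin (δ r) → M)) :
    Set M :=
  {m | ∃ r : R, ∃ t ∈ I r, ∃ i, t i = m}


lemma eqvGen_eq {M 𝒳' : Type} (v : 𝒳' → M) {S : 𝒳' → 𝒳' → Prop}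
    (h : ∀ a b, S a b → v a = v b) :
    ∀ a b, Relation.EqvGen S a b → v a = v b := by
  intro a b hab
  induction hab with
  | rel a b h' => exact h a b h'
  | refl => rfl
  | symm _ _ _ ih => exact ih.symm
  | trans _ _ _ _ _ ih1 ih2 => exact ih1.trans ih2

lemma key_eq {M : Type} (I : ∀ r : R, Set (Fin (δ r) → M)) (φ : Fml R δ 𝒳) :
    ∀ v : 𝒳 → M,
      (v ∈ val I φ → ∀ p ∈ eqR φ, v p.1 = v p.2) ∧
      (v ∉ val I φ → ∀ p ∈ coeqR φ, v p.1 = v p.2) := by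
  induction φ with
  | one =>
    intro v
    constructor <;> intro _ p hp <;> exact congrArg v hp
  | rel r x =>
    intro v
    constructor <;> intro _ p hp <;> exact congrArg v hp
  | eql x y =>
    intro v
    constructor
    · intro hv p hp
      have hxy : v x = v y := hv
      exact eqvGen_eq v (fun a b hab => by
        have : (a, b) = (x, y) := hab
        rw [Prod.mk.injEq] at this
        rw [this.1, this.2]; exact hxy) p.1 p.2 hp
    · intro _ p hp
      exact congrArg v hp
  | not φ ih =>
    intro v
    constructor
    · intro hv p hp
      exact (ih v).2 hv p hp
    · intro hv p hp
      have : v ∈ val I φ := not_not.mp hv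
      exact (ih v).1 this p hp
  | and φ ψ ihφ ihψ =>
    intro v
    constructor
    · intro hv p hp
      exact eqvGen_eq v (fun a b hab => by
        cases hab with
        | inl h => exact (ihφ v).1 hv.1 (a, b) h
        | inr h => exact (ihψ v).1 hv.2 (a, b) h) p.1 p.2 hp
    · intro hv p hp
      rcases not_and_or.mp hv with h | h
      · exact (ihφ v).2 h (p.1, p.2) hp.1
      · exact (ihψ v).2 h (p.1, p.2) hp.2
  | or φ ψ ihφ ihψ =>
    intro v
    constructor
    · intro hv p hp
      cases hv with
      | inl h => exact (ihφ v).1 h (p.1, p.2) hp.1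
      | inr h => exact (ihψ v).1 h (p.1, p.2) hp.2
    · intro hv p hp
      have hv' : ¬(v ∈ val I φ ∨ v ∈ val I ψ) := hv
      have hv := not_or.mp hv' 
      exact eqvGen_eq v (fun a b hab => by
        cases hab with
        | inl h => exact (ihφ v).2 hv.1 (a, b) h
        | inr h => exact (ihψ v).2 hv.2 (a, b) h) p.1 p.2 hp
  | ex x φ ih =>
    intro v
    constructor
    · intro hv p hp
      obtain ⟨u, hu, hagree⟩ := hv
      exact eqvGen_eq v (fun a b hab => by
        have hu' := (ih u).1 hu (a, b) hab.1
        rw [← hagree a hab.2.1, ← hagree b hab.2.2]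
        exact hu') p.1 p.2 hp
    · intro hv p hp
      have hvφ : v ∉ val I φ := fun h => hv ⟨v, h, fun _ _ => rfl⟩
      exact eqvGen_eq v (fun a b hab => (ih v).2 hvφ (a, b) hab.1) p.1 p.2 hp

lemma key_adom {M : Type} (I : ∀ r : R, Set (Fin (δ r) → M)) (φ : Fml R δ 𝒳) :
    ∀ v : 𝒳 → M,
      (v ∈ val I φ → ∀ x ∈ gen0 φ, v x ∈ adom I) ∧
      (v ∉ val I φ → ∀ x ∈ cogen0 φ, v x ∈ adom I) := by
  induction φ with
  | one =>
    intro v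
    constructor <;> intro _ x hx <;> exact absurd hx (Set.notMem_empty x)
  | rel r y =>
    intro v
    constructor
    · intro hv x hx
      obtain ⟨i, rfl⟩ := hx
      exact ⟨r, _, hv, i, rfl⟩
    · intro _ x hx
      exact absurd hx (Set.notMem_empty x)
  | eql x y =>
    intro v
    constructor <;> intro _ z hz <;> exact absurd hz (Set.notMem_empty z)
  | not φ ih =>
    intro v
    constructor
    · intro hv x hx
      exact (ih v).2 hv x hx
    · intro hv x hx
      exact (ih v).1 (not_not.mp hv) x hx
  | and φ ψ ihφ ihψ =>
    intro v
    constructor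
    · intro hv x hx
      obtain ⟨z, hz, hzx⟩ := hx
      have heq : v z = v x := (key_eq I (φ.and ψ) v).1 hv (z, x) hzx
      rw [← heq]
      cases hz with
      | inl h => exact (ihφ v).1 hv.1 z h
      | inr h => exact (ihψ v).1 hv.2 z h
    · intro hv x hx
      rcases not_and_or.mp hv with h | h
      · exact (ihφ v).2 h x hx.1
      · exact (ihψ v).2 h x hx.2
  | or φ ψ ihφ ihψ =>
    intro v
    constructor
    · intro hv x hx
      cases hv with
      | inl h => exact (ihφ v).1 h x hx.1
      | inr h => exact (ihψ v).1 h x hx.2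
    · intro hv x hx
      have hv' : ¬(v ∈ val I φ ∨ v ∈ val I ψ) := hv
      have hv := not_or.mp hv' 
      obtain ⟨z, hz, hzx⟩ := hx
      have heq : v z = v x := eqvGen_eq v (fun a b hab => by
        cases hab with
        | inl h => exact (key_eq I φ v).2 hv.1 (a, b) h
        | inr h => exact (key_eq I ψ v).2 hv.2 (a, b) h) z x hzx
      rw [← heq]
      cases hz with
      | inl h => exact (ihφ v).2 hv.1 z h
      | inr h => exact (ihψ v).2 hv.2 z h
  | ex x φ ih =>
    intro v
    constructor
    · intro hv y hy
      obtain ⟨u, hu, hagree⟩ := hv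
      rw [← hagree y hy.2]
      exact (ih u).1 hu y hy.1
    · intro hv y hy
      have hvφ : v ∉ val I φ := fun h => hv ⟨v, h, fun _ _ => rfl⟩
      exact (ih v).2 hvφ y hy.1

theorem stmt13 {R : Type} [Fintype R] {δ : R → ℕ} {𝒳 : Type} [Fintype 𝒳]
    (M : Type) [Fintype M] [Nonempty M] (I : ∀ r : R, Set (Fin (δ r) → M))
    (φ : Fml R δ 𝒳) :
    proj (gen0 φ) (val I φ) ⊆ funPow (adom I) (gen0 φ) ∧
    proj (cogen0 φ) ((val I φ)ᶜ) ⊆ funPow (adom I) (cogen0 φ) := by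
  constructor
  · rintro f ⟨v, hv, rfl⟩ a
    exact (key_adom I φ v).1 hv a.1 a.2
  · rintro f ⟨v, hv, rfl⟩ a
    exact (key_adom I φ v).2 hv a.1 a.2
end

section
/- For every structure: if a formula φ is positive then ‖cogen(φ)‖ = 𝒱, and if φ is negative then ‖gen(φ)‖ = 𝒱. -/
variable {R : Type} {δ : R → ℕ} {𝒳 : Type}

section Gen

variable [Fintype 𝒳] [LinearOrder 𝒳]

/-- `(∃S)φ`: existential quantification over all variables of `S`, taken in
increasing order. -/
def exAll (S : Finset 𝒳) (φ : Fml R δ 𝒳) : Fml R δ 𝒳 :=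
  (S.sort (· ≤ ·)).foldr .ex φ

/-- `φ ∨* ψ = (∃ FV(φ)∖FV(ψ))φ ∨ (∃ FV(ψ)∖FV(φ))ψ`. -/
def orStar (φ ψ : Fml R δ 𝒳) : Fml R δ 𝒳 :=
  .or (exAll (FV φ \ FV ψ) φ) (exAll (FV ψ \ FV φ) ψ)

/-- The conjunction `(x₁≈y₁)∧⋯∧(xₙ≈yₙ)` over a list of pairs, `1` if empty. -/
def conjList : List (𝒳 × 𝒳) → Fml R δ 𝒳
  | [] => .one
  | p :: ps => ps.foldl (fun acc q => .and acc (.eql q.1 q.2)) (.eql p.1 p.2)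

/-- The set of pairs occurring in a list. -/
def pairsOf (l : List (𝒳 × 𝒳)) : Set (𝒳 × 𝒳) := {p | p ∈ l}

/-- `rep` assigns to every equivalence relation on `𝒳` a minimal representation:
a list of pairs, minimal under inclusion, generating the equivalence. -/
def MinRep (rep : Set (𝒳 × 𝒳) → List (𝒳 × 𝒳)) : Prop :=
  ∀ E : Set (𝒳 × 𝒳), Equivalence (fun a b => (a, b) ∈ E) →
    EqGen (pairsOf (rep E)) = E ∧
    ∀ R₀ ⊆ pairsOf (rep E), EqGen R₀ = E → R₀ = pairsOf (rep E)

variable (rep : Set (𝒳 × 𝒳) → List (𝒳 × 𝒳))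

/-- The pair `(gen(φ), cogen(φ))` of the generator and cogenerator of `φ`.
In the conjunction case, `φ ≈∧ ψ` is the conjunction of equalities over
`rep(Eq(eq(φ∧ψ) ∖ eq(gen(φ)∧gen(ψ))))`. -/
def genco : Fml R δ 𝒳 → Fml R δ 𝒳 × Fml R δ 𝒳
  | .one => (.one, .one)
  | .rel r x => (.rel r x, .one)
  | .eql _ _ => (.one, .one)
  | .not φ => ((genco φ).2, (genco φ).1)
  | .and φ ψ =>
      (.and (.and (genco φ).1 (genco ψ).1)
        (conjList (rep (EqGen (eqR (φ.and ψ) \ eqR ((genco φ).1.and (genco ψ).1))))),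
       orStar (genco φ).2 (genco ψ).2)
  | .or φ ψ =>
      (orStar (genco φ).1 (genco ψ).1,
       .and (.and (genco φ).2 (genco ψ).2)
        (conjList (rep (EqGen (eqR ((Fml.not φ).and (Fml.not ψ)) \
          eqR ((genco φ).2.and (genco ψ).2))))))
  | .ex x φ => (.ex x (genco φ).1, .ex x (genco φ).2)

/-- `gen(φ)`. -/
def gen (φ : Fml R δ 𝒳) : Fml R δ 𝒳 := (genco rep φ).1

/-- `cogen(φ)`. -/
def cogen (φ : Fml R δ 𝒳) : Fml R δ 𝒳 := (genco rep φ).2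

end Gen


section Aux

lemma id_subset_eqGen {𝒳 : Type} (S : Set (𝒳 × 𝒳)) : idRel' ⊆ EqGen S := by
  rintro ⟨a, b⟩ (h : a = b)
  subst h
  exact Relation.EqvGen.refl a

lemma eqGen_subset_id {𝒳 : Type} {S : Set (𝒳 × 𝒳)} (h : S ⊆ idRel') :
    EqGen S = (idRel' : Set (𝒳 × 𝒳)) := by
  refine subset_antisymm ?_ (id_subset_eqGen S)
  rintro ⟨a, b⟩ (hab : Relation.EqvGen _ a b)
  induction hab with
  | rel x y h' => exact h h'
  | refl x => rfl
  | symm x y _ ih => exact (Eq.symm ih : y = x)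
  | trans x y z _ _ ih1 ih2 => exact (ih1.trans ih2 : x = z)

lemma id_subset_eqco {R : Type} {δ : R → ℕ} {𝒳 : Type} (φ : Fml R δ 𝒳) :
    idRel' ⊆ eqR φ ∧ idRel' ⊆ coeqR φ := by
  induction φ with
  | one => exact ⟨subset_rfl, subset_rfl⟩
  | rel r x => exact ⟨subset_rfl, subset_rfl⟩
  | eql x y => exact ⟨id_subset_eqGen _, subset_rfl⟩
  | not φ ih => exact ⟨ih.2, ih.1⟩
  | and φ ψ ihφ ihψ =>
      exact ⟨id_subset_eqGen _, Set.subset_inter ihφ.2 ihψ.2⟩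
  | or φ ψ ihφ ihψ =>
      exact ⟨Set.subset_inter ihφ.1 ihψ.1, id_subset_eqGen _⟩
  | ex x φ ih => exact ⟨id_subset_eqGen _, id_subset_eqGen _⟩

lemma pos_coeq_id {R : Type} {δ : R → ℕ} {𝒳 : Type} (φ : Fml R δ 𝒳) :
    (Positive φ → coeqR φ = idRel') ∧ (¬ Positive φ → eqR φ = idRel') := by
  induction φ with
  | one => exact ⟨fun _ => rfl, fun h => absurd trivial h⟩
  | rel r x => exact ⟨fun _ => rfl, fun h => absurd trivial h⟩
  | eql x y => exact ⟨fun _ => rfl, fun h => absurd trivial h⟩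
  | not φ ih =>
      refine ⟨fun h => ih.2 h, fun h => ih.1 ?_⟩
      exact not_not.mp h
  | and φ ψ ihφ ihψ =>
      constructor
      · rintro (h | h)
        · refine subset_antisymm ?_ (Set.subset_inter (ihφ.1 h).superset (id_subset_eqco ψ).2)
          rw [← ihφ.1 h]; exact Set.inter_subset_left
        · refine subset_antisymm ?_ (Set.subset_inter (id_subset_eqco φ).2 (ihψ.1 h).superset)
          rw [← ihψ.1 h]; exact Set.inter_subset_right
      · intro h
        have h' : ¬ Positive φ ∧ ¬ Positive ψ := not_or.mp h
        show EqGen (eqR φ ∪ eqR ψ) = idRel'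
        apply eqGen_subset_id
        rw [ihφ.2 h'.1, ihψ.2 h'.2, Set.union_self]
  | or φ ψ ihφ ihψ =>
      constructor
      · rintro ⟨h1, h2⟩
        show EqGen (coeqR φ ∪ coeqR ψ) = idRel'
        apply eqGen_subset_id
        rw [ihφ.1 h1, ihψ.1 h2, Set.union_self]
      · intro h
        rcases not_and_or.mp h with h | h
        · refine subset_antisymm ?_ (Set.subset_inter (ihφ.2 h).superset (id_subset_eqco ψ).1)
          rw [← ihφ.2 h]; exact Set.inter_subset_left
        · refine subset_antisymm ?_ (Set.subset_inter (id_subset_eqco φ).1 (ihψ.2 h).superset)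
          rw [← ihψ.2 h]; exact Set.inter_subset_right
  | ex x φ ih =>
      constructor
      · intro h
        show EqGen (coeqR φ ∩ offDiag x) = idRel'
        apply eqGen_subset_id
        rw [ih.1 h]; exact Set.inter_subset_left
      · intro h
        show EqGen (eqR φ ∩ offDiag x) = idRel'
        apply eqGen_subset_id
        rw [ih.2 h]; exact Set.inter_subset_left

lemma rep_id_nil {𝒳 : Type} {rep : Set (𝒳 × 𝒳) → List (𝒳 × 𝒳)}
    [Fintype 𝒳] [LinearOrder 𝒳] (hrep : MinRep rep) :
    rep (idRel' : Set (𝒳 × 𝒳)) = [] := by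
  have hequiv : Equivalence (fun a b : 𝒳 => (a, b) ∈ (idRel' : Set (𝒳 × 𝒳))) :=
    ⟨fun a => rfl, Eq.symm, Eq.trans⟩
  obtain ⟨h1, h2⟩ := hrep idRel' hequiv
  have h3 : (∅ : Set (𝒳 × 𝒳)) = pairsOf (rep idRel') :=
    h2 ∅ (Set.empty_subset _) (eqGen_subset_id (Set.empty_subset _))
  rw [List.eq_nil_iff_forall_not_mem]
  intro p hp
  exact absurd (h3 ▸ (hp : p ∈ pairsOf (rep idRel'))) (Set.notMem_empty p)

lemma val_ex_univ {R : Type} {δ : R → ℕ} {𝒳 : Type} {M : Type}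
    (I : ∀ r : R, Set (Fin (δ r) → M)) (x : 𝒳) {χ : Fml R δ 𝒳}
    (h : val I χ = Set.univ) : val I (.ex x χ) = Set.univ := by
  ext v
  simp only [val, Set.mem_setOf_eq, Set.mem_univ, iff_true]
  exact ⟨v, by rw [h]; trivial, fun _ _ => rfl⟩

lemma val_foldr_ex_univ {R : Type} {δ : R → ℕ} {𝒳 : Type} {M : Type}
    (I : ∀ r : R, Set (Fin (δ r) → M)) (l : List 𝒳) {χ : Fml R δ 𝒳}
    (h : val I χ = Set.univ) : val I (l.foldr Fml.ex χ) = Set.univ := by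
  induction l with
  | nil => exact h
  | cons x xs ih => exact val_ex_univ I x ih

lemma val_orStar_univ {R : Type} {δ : R → ℕ} {𝒳 : Type} {M : Type}
    [Fintype 𝒳] [LinearOrder 𝒳]
    (I : ∀ r : R, Set (Fin (δ r) → M)) {χ₁ χ₂ : Fml R δ 𝒳}
    (h : val I χ₁ = Set.univ ∨ val I χ₂ = Set.univ) :
    val I (orStar χ₁ χ₂) = Set.univ := by
  unfold orStar exAll
  show val I _ ∪ val I _ = Set.univ
  rcases h with h | h
  · rw [val_foldr_ex_univ I ((FV χ₁ \ FV χ₂).sort (· ≤ ·)) h, Set.univ_union]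
  · rw [val_foldr_ex_univ I ((FV χ₂ \ FV χ₁).sort (· ≤ ·)) h, Set.union_univ]

end Aux

theorem stmt14 {R : Type} [Fintype R] {δ : R → ℕ} {𝒳 : Type} [Fintype 𝒳]
    [LinearOrder 𝒳] (rep : Set (𝒳 × 𝒳) → List (𝒳 × 𝒳)) (hrep : MinRep rep)
    (M : Type) [Fintype M] [Nonempty M] (I : ∀ r : R, Set (Fin (δ r) → M))
    (φ : Fml R δ 𝒳) :
    (Positive φ → val I (cogen rep φ) = Set.univ) ∧
    (¬ Positive φ → val I (gen rep φ) = Set.univ) := by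
  induction φ with
  | one => exact ⟨fun _ => rfl, fun h => absurd trivial h⟩
  | rel r x => exact ⟨fun _ => rfl, fun h => absurd trivial h⟩
  | eql x y => exact ⟨fun _ => rfl, fun h => absurd trivial h⟩
  | not φ ih =>
      exact ⟨fun h => ih.2 h, fun h => ih.1 (not_not.mp h)⟩
  | and φ ψ ihφ ihψ =>
      constructor
      · rintro (h | h)
        · exact val_orStar_univ I (Or.inl (ihφ.1 h))
        · exact val_orStar_univ I (Or.inr (ihψ.1 h))
      · intro h
        have h' : ¬ Positive φ ∧ ¬ Positive ψ := not_or.mp h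
        have heq : eqR (φ.and ψ) = idRel' := (pos_coeq_id (φ.and ψ)).2 h
        have hdiff : eqR (φ.and ψ) \ eqR ((genco rep φ).1.and (genco rep ψ).1) = ∅ := by
          rw [heq]
          exact Set.diff_eq_empty.mpr (id_subset_eqco _).1
        have hg : gen rep (φ.and ψ) =
            Fml.and (Fml.and (gen rep φ) (gen rep ψ)) Fml.one := by
          show Fml.and (Fml.and (genco rep φ).1 (genco rep ψ).1)
            (conjList (rep (EqGen (eqR (φ.and ψ) \
              eqR ((genco rep φ).1.and (genco rep ψ).1))))) = _
          rw [hdiff, eqGen_subset_id (Set.empty_subset _), rep_id_nil hrep]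
          rfl
        rw [hg]
        show (val I (gen rep φ) ∩ val I (gen rep ψ)) ∩ val I Fml.one = Set.univ
        rw [ihφ.2 h'.1, ihψ.2 h'.2]
        simp [val]
  | or φ ψ ihφ ihψ =>
      constructor
      · rintro ⟨h1, h2⟩
        have hneg : ¬ Positive ((Fml.not φ).and (Fml.not ψ)) := by
          rintro (hc | hc)
          · exact hc h1
          · exact hc h2
        have heq : eqR ((Fml.not φ).and (Fml.not ψ)) = idRel' :=
          (pos_coeq_id _).2 hneg
        have hdiff : eqR ((Fml.not φ).and (Fml.not ψ)) \
            eqR ((genco rep φ).2.and (genco rep ψ).2) = ∅ := by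
          rw [heq]
          exact Set.diff_eq_empty.mpr (id_subset_eqco _).1
        have hg : cogen rep (φ.or ψ) =
            Fml.and (Fml.and (cogen rep φ) (cogen rep ψ)) Fml.one := by
          show Fml.and (Fml.and (genco rep φ).2 (genco rep ψ).2)
            (conjList (rep (EqGen (eqR ((Fml.not φ).and (Fml.not ψ)) \
              eqR ((genco rep φ).2.and (genco rep ψ).2))))) = _
          rw [hdiff, eqGen_subset_id (Set.empty_subset _), rep_id_nil hrep]
          rfl
        rw [hg]
        show (val I (cogen rep φ) ∩ val I (cogen rep ψ)) ∩ val I Fml.one = Set.univ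
        rw [ihφ.1 h1, ihψ.1 h2]
        simp [val]
      · intro h
        rcases not_and_or.mp h with h | h
        · exact val_orStar_univ I (Or.inl (ihφ.2 h))
        · exact val_orStar_univ I (Or.inr (ihψ.2 h))
  | ex x φ ih =>
      exact ⟨fun h => val_ex_univ I x (ih.1 h), fun h => val_ex_univ I x (ih.2 h)⟩
end
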